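/- arXiv:1401.4739 — 7 statements merged into one kernel-verified Lean document; each statement's English description precedes it below -/
import Mathlib

section
/- Let M be a binary matrix with corresponding bipartite graph G(M), let w be a black vertex and let x, y be two distinct white neighbors of w. Let H be the subgraph of G(M) induced by (R \ (N(x) ∩ N(y))) ∪ (C \ N(w)) ∪ {x,y}, where R and C are the sets of black and white vertices. If p is a shortest path between x and y in H, then the cycle obtained from p by adding the vertex w and the edges {w,x} and {w,y} is an induced (chordless) cycle of G(M) of length at least 6. -/
/-!
A shortest path is chordless, since a chord would shortcut it. In `H` the only neighbours of `w`
are `x` and `y`, so closing the path up through `w` yields a chordless cycle. As `G(M)` is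
bipartite the path has even length; the length is not `0` because `x ≠ y`, and not `2` because a
common (black) neighbour of `x` and `y` is not a vertex of `H`. Hence the cycle has length at
least `6`.
-/

open SimpleGraph

/-- The bipartite graph corresponding to a binary matrix: black vertices are rows
(`Sum.inl`), white vertices are columns (`Sum.inr`), and row `i` is adjacent to
column `j` iff `M i j = true`. -/
def graphOf {m n : ℕ} (M : Fin m → Fin n → Bool) : SimpleGraph (Fin m ⊕ Fin n) :=
  SimpleGraph.fromRel (fun p q => ∃ i j, p = Sum.inl i ∧ q = Sum.inr j ∧ M i j = true)

/-- The vertex set `(R \ (N(x) ∩ N(y))) ∪ (C \ N(w)) ∪ {x, y}`, where `R` is the set of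
black (row) vertices and `C` the set of white (column) vertices of `G(M)`. -/
def tuckerSet {m n : ℕ} (M : Fin m → Fin n → Bool) (w : Fin m) (x y : Fin n) :
    Set (Fin m ⊕ Fin n) :=
  (Sum.inl '' {r | ¬((graphOf M).Adj (Sum.inl r) (Sum.inr x) ∧
      (graphOf M).Adj (Sum.inl r) (Sum.inr y))}) ∪
    (Sum.inr '' {c | ¬(graphOf M).Adj (Sum.inl w) (Sum.inr c)}) ∪
    {Sum.inr x, Sum.inr y}

lemma mem_tuckerSet_x {m n : ℕ} (M : Fin m → Fin n → Bool) (w : Fin m) (x y : Fin n) :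
    Sum.inr x ∈ tuckerSet M w x y := Or.inr (Or.inl rfl)

lemma mem_tuckerSet_y {m n : ℕ} (M : Fin m → Fin n → Bool) (w : Fin m) (x y : Fin n) :
    Sum.inr y ∈ tuckerSet M w x y := Or.inr (Or.inr rfl)

def inducedHom {V : Type*} (G : SimpleGraph V) (s : Set V) : G.induce s →g G :=
  ⟨Subtype.val, fun h => h⟩

def IsInducedCycle {V : Type*} {G : SimpleGraph V} {v : V} (c : G.Walk v v) : Prop :=
  c.IsCycle ∧ ∀ a b, a ∈ c.support → b ∈ c.support → G.Adj a b → c.toSubgraph.Adj a b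

namespace SimpleGraph.Walk

variable {V W : Type*} {G : SimpleGraph V} {G' : SimpleGraph W}

theorem exists_length_lt_of_isChord {a b : V} {e : Sym2 V} (p : G.Walk a b) (he : p.IsChord e) :
    ∃ q : G.Walk a b, q.length < p.length := by
  classical
  induction e using Sym2.ind with | h u v => ?_
  induction p with
  | nil =>
    obtain ⟨huv, -, hu, hv⟩ := isChord_sym2Mk.mp he
    simp only [support_nil, List.mem_singleton] at hu hv
    exact absurd (hu.trans hv.symm) huv.ne
  | @cons a z b haz r ih =>
    obtain ⟨huv, hne, hu, hv⟩ := isChord_sym2Mk.mp he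
    simp only [edges_cons, List.mem_cons, not_or] at hne
    simp only [support_cons, List.mem_cons] at hu hv
    -- a chord from `a` into `r` bypasses the initial segment of `r`
    have shortcut : ∀ t, t ∈ r.support → t ≠ z → G.Adj a t →
        ∃ q : G.Walk a b, q.length < (cons haz r).length :=
      fun t ht htz hat => ⟨cons hat (r.dropUntil t ht), by
        simpa only [length_cons, add_lt_add_iff_right] using length_dropUntil_lt_length ht htz⟩
    rcases hu with rfl | hu <;> rcases hv with rfl | hv
    · exact absurd rfl huv.ne
    · exact shortcut v hv (by rintro rfl; exact hne.1 rfl) huv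
    · exact shortcut u hu (by rintro rfl; exact hne.1 Sym2.eq_swap) huv.symm
    · obtain ⟨q, hq⟩ := ih (isChord_sym2Mk.mpr ⟨huv, hne.2, hu, hv⟩)
      exact ⟨cons haz q, by simpa only [length_cons, add_lt_add_iff_right] using hq⟩

theorem isChordless_of_forall_isPath_length_le {a b : V} {p : G.Walk a b}
    (hmin : ∀ q : G.Walk a b, q.IsPath → p.length ≤ q.length) : p.IsChordless := by
  classical
  intro e he
  obtain ⟨q, hq⟩ := p.exists_length_lt_of_isChord he
  have := hmin q.bypass q.bypass_isPath
  have := q.length_bypass_le_length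
  omega

theorem IsChordless.map {a b : V} {p : G.Walk a b} (hp : p.IsChordless) (f : G ↪g G') :
    (p.map f.toHom).IsChordless := by
  rw [isChordless_iff_forall_mem_edges] at hp ⊢
  intro u v hu hv huv
  simp only [support_map, List.mem_map] at hu hv
  obtain ⟨u, hu, rfl⟩ := hu
  obtain ⟨v, hv, rfl⟩ := hv
  rw [edges_map]
  exact List.mem_map_of_mem (hp hu hv (f.map_adj_iff.mp huv))

theorem isCycle_cons_concat {u v w : V} {p : G.Walk u v} (hp : p.IsPath) (hwu : G.Adj w u)
    (hvw : G.Adj v w) (hw : w ∉ p.support) (huv : u ≠ v) : (cons hwu (p.concat hvw)).IsCycle := by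
  refine (cons_isCycle_iff _ hwu).mpr ⟨hp.concat hw hvw, ?_⟩
  rw [edges_concat, List.concat_eq_append, List.mem_append, List.mem_singleton, Sym2.eq_iff]
  rintro (h | ⟨rfl, -⟩ | ⟨-, rfl⟩)
  · exact hw (p.fst_mem_support_of_mem_edges h)
  · exact hw p.end_mem_support
  · exact huv rfl

theorem IsChordless.cons_concat {u v w : V} {p : G.Walk u v} (hp : p.IsChordless)
    (hwu : G.Adj w u) (hvw : G.Adj v w) (hN : ∀ b ∈ p.support, G.Adj w b → b = u ∨ b = v) :
    (cons hwu (p.concat hvw)).IsChordless := by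
  rw [isChordless_iff_forall_mem_edges] at hp ⊢
  have hw : ∀ b ∈ p.support, G.Adj w b → s(w, b) ∈ (cons hwu (p.concat hvw)).edges := by
    intro b hb hwb
    rcases hN b hb hwb with rfl | rfl <;> simp [edges_concat, Sym2.eq_swap]
  intro a b ha hb hab
  simp only [support_cons, support_concat, List.mem_cons, List.mem_append, List.not_mem_nil,
    or_false] at ha hb
  rcases ha with rfl | ha | rfl <;> rcases hb with rfl | hb | rfl
  all_goals first
    | exact absurd rfl hab.ne
    | exact hw b hb hab
    | exact Sym2.eq_swap ▸ hw a ha hab.symm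
    | simp [edges_concat, hp ha hb hab]

end SimpleGraph.Walk

theorem isInducedCycle_of_isCycle_of_isChordless {V : Type*} {G : SimpleGraph V} {v : V}
    {c : G.Walk v v} (hc : c.IsCycle) (hc' : c.IsChordless) : IsInducedCycle c :=
  ⟨hc, fun _ _ ha hb hab =>
    Walk.isInduced_toSubgraph.mpr hc' (c.mem_verts_toSubgraph.mpr ha)
      (c.mem_verts_toSubgraph.mpr hb) hab⟩

theorem mem_of_mem_support_map_inducedHom {V : Type*} {G : SimpleGraph V} {s : Set V}
    {a b : s} {p : (G.induce s).Walk a b} {v : V} (hv : v ∈ (p.map (inducedHom G s)).support) :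
    v ∈ s := by
  rw [Walk.support_map, List.mem_map] at hv
  obtain ⟨⟨v, hv⟩, -, rfl⟩ := hv
  exact hv

section graphOf

variable {m n : ℕ} {M : Fin m → Fin n → Bool}

theorem graphOf_adj_isLeft_ne {a b : Fin m ⊕ Fin n} (h : (graphOf M).Adj a b) :
    a.isLeft ≠ b.isLeft := by
  obtain ⟨-, ⟨i, j, rfl, rfl, -⟩ | ⟨i, j, rfl, rfl, -⟩⟩ := h <;> simp

def isLeftColoring (M : Fin m → Fin n → Bool) : (graphOf M).Coloring Bool :=
  Coloring.mk Sum.isLeft graphOf_adj_isLeft_ne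

theorem even_length_of_walk_inr {x y : Fin n} (q : (graphOf M).Walk (Sum.inr x) (Sum.inr y)) :
    Even q.length :=
  ((isLeftColoring M).even_length_iff_congr q).mpr Iff.rfl

theorem exists_eq_inl_of_adj_inr {a : Fin m ⊕ Fin n} {j : Fin n}
    (h : (graphOf M).Adj a (Sum.inr j)) : ∃ i, a = Sum.inl i := by
  cases a with
  | inl i => exact ⟨i, rfl⟩
  | inr _ => exact (graphOf_adj_isLeft_ne h rfl).elim

theorem exists_eq_inr_of_inl_adj {b : Fin m ⊕ Fin n} {i : Fin m}
    (h : (graphOf M).Adj (Sum.inl i) b) : ∃ j, b = Sum.inr j := by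
  cases b with
  | inl _ => exact (graphOf_adj_isLeft_ne h rfl).elim
  | inr j => exact ⟨j, rfl⟩

end graphOf

section tuckerSet

variable {m n : ℕ} {M : Fin m → Fin n → Bool} {w : Fin m} {x y : Fin n}

theorem inl_notMem_tuckerSet {r : Fin m} (hx : (graphOf M).Adj (Sum.inl r) (Sum.inr x))
    (hy : (graphOf M).Adj (Sum.inl r) (Sum.inr y)) : Sum.inl r ∉ tuckerSet M w x y := by
  simp [tuckerSet, hx, hy]

theorem eq_inr_or_eq_inr_of_adj_of_mem_tuckerSet {b : Fin m ⊕ Fin n}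
    (hb : b ∈ tuckerSet M w x y) (hwb : (graphOf M).Adj (Sum.inl w) b) :
    b = Sum.inr x ∨ b = Sum.inr y := by
  obtain ⟨c, rfl⟩ := exists_eq_inr_of_inl_adj hwb
  simp_all [tuckerSet]

theorem four_le_length_of_support_subset_tuckerSet (hxy : x ≠ y)
    (q : (graphOf M).Walk (Sum.inr x) (Sum.inr y)) (hq : ∀ v ∈ q.support, v ∈ tuckerSet M w x y) :
    4 ≤ q.length := by
  obtain ⟨k, hk⟩ := even_length_of_walk_inr q
  have h0 : q.length ≠ 0 := fun h => hxy (Sum.inr_injective (Walk.eq_of_length_eq_zero h))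
  suffices h2 : q.length ≠ 2 by omega
  intro h2
  have hx : (graphOf M).Adj (Sum.inr x) (q.getVert 1) := by
    simpa using q.adj_getVert_succ (i := 0) (by omega)
  have hy : (graphOf M).Adj (q.getVert 1) (Sum.inr y) := by
    have h := q.adj_getVert_succ (i := 1) (by omega)
    rwa [show 1 + 1 = q.length by omega, Walk.getVert_length] at h
  obtain ⟨r, hr⟩ := exists_eq_inl_of_adj_inr hy
  rw [hr] at hx hy
  exact inl_notMem_tuckerSet hx.symm hy (hr ▸ hq _ (q.getVert_mem_support 1))

end tuckerSet

/-- If `p` is a shortest path between `x` and `y` in the induced subgraph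
`H = G(M)[(R \ (N(x) ∩ N(y))) ∪ (C \ N(w)) ∪ {x,y}]`, then the closed walk obtained
from `p` by adding the vertex `w` and the edges `{w,x}`, `{w,y}` is an induced
(chordless) cycle of `G(M)` of length at least `6`. -/
theorem shortest_path_gives_induced_cycle {m n : ℕ} (M : Fin m → Fin n → Bool)
    (w : Fin m) (x y : Fin n) (hxy : x ≠ y)
    (hwx : (graphOf M).Adj (Sum.inl w) (Sum.inr x))
    (hwy : (graphOf M).Adj (Sum.inl w) (Sum.inr y))
    (p : ((graphOf M).induce (tuckerSet M w x y)).Walk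
      ⟨Sum.inr x, mem_tuckerSet_x M w x y⟩ ⟨Sum.inr y, mem_tuckerSet_y M w x y⟩)
    (hp : p.IsPath)
    (hmin : ∀ q : ((graphOf M).induce (tuckerSet M w x y)).Walk
      ⟨Sum.inr x, mem_tuckerSet_x M w x y⟩ ⟨Sum.inr y, mem_tuckerSet_y M w x y⟩,
      q.IsPath → p.length ≤ q.length) :
    let c : (graphOf M).Walk (Sum.inl w) (Sum.inl w) :=
      SimpleGraph.Walk.cons hwx
        ((p.map (inducedHom (graphOf M) (tuckerSet M w x y))).concat hwy.symm)
    IsInducedCycle c ∧ 6 ≤ c.length := by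
  intro c
  set q := p.map (inducedHom (graphOf M) (tuckerSet M w x y))
  have hq : ∀ v ∈ q.support, v ∈ tuckerSet M w x y := fun _ => mem_of_mem_support_map_inducedHom
  have hqpath : q.IsPath := hp.map Subtype.val_injective
  have hqchordless : q.IsChordless :=
    (Walk.isChordless_of_forall_isPath_length_le hmin).map (Embedding.induce _)
  have hwq : Sum.inl w ∉ q.support := fun h => inl_notMem_tuckerSet hwx hwy (hq _ h)
  refine ⟨isInducedCycle_of_isCycle_of_isChordless
    (Walk.isCycle_cons_concat hqpath hwx hwy.symm hwq fun h => hxy (Sum.inr_injective h))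
    (hqchordless.cons_concat hwx hwy.symm fun b hb hwb =>
      eq_inr_or_eq_inr_of_adj_of_mem_tuckerSet (hq b hb) hwb), ?_⟩
  have hc : c.length = q.length + 1 + 1 :=
    (Walk.length_cons _ _).trans (congrArg (· + 1) (Walk.length_concat _ _))
  rw [hc]
  exact Nat.add_le_add_right (Nat.add_le_add_right
    (four_le_length_of_support_subset_tuckerSet hxy q hq) 1) 1
end

section
/- Let M be a binary matrix with corresponding bipartite graph G(M), let w be a black vertex and let x, y be two distinct white neighbors of w. Let H be the subgraph of G(M) induced by (R \ (N(x) ∩ N(y))) ∪ (C \ N(w)) ∪ {x,y}, where R and C are the sets of black and white vertices. If Z is an induced (chordless) cycle of G(M) of length at least 6 that contains w and in which the two neighbors of w on Z are x and y, then every vertex of Z other than w belongs to H; consequently Z minus w is an x–y path in H, and the length of Z is at least dist_H(x,y) + 2. -/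
open SimpleGraph

/-!
Removing `w` from the cycle `Z` leaves an `x`–`y` path `q` with `|Z| = |q| + 2`. A white vertex
of `Z` adjacent to `w` would give a chord unless it is `x` or `y`. A black vertex `r ≠ w` of `Z`
adjacent to both `x` and `y` makes `xr` and `ry` edges of the chordless `Z`, hence of `q`; in a
path an edge at an endpoint is the first or last edge, so `q = x r y` and `|Z| = 4 < 6`. Thus `q`
lies in `H` and lifts to an `x`–`y` path of `H`.
-/

namespace SimpleGraph.Walk

variable {V : Type*} {G : SimpleGraph V}

section Induce

variable {s : Set V} {u v : V}

@[simp]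
lemma length_induce (p : G.Walk u v) (hp : ∀ a ∈ p.support, a ∈ s) :
    (p.induce s hp).length = p.length := by
  rw [← length_map (Embedding.induce s).toHom, map_induce]
  rfl

lemma support_induce_map_val (p : G.Walk u v) (hp : ∀ a ∈ p.support, a ∈ s) :
    (p.induce s hp).support.map Subtype.val = p.support := by
  simp

lemma IsPath.induce {p : G.Walk u v} (h : p.IsPath) (hp : ∀ a ∈ p.support, a ∈ s) :
    (p.induce s hp).IsPath :=
  IsPath.of_map (f := (Embedding.induce s).toHom) (by rwa [map_induce])

end Induce

lemma IsPath.length_eq_two_of_mem_edges {u v a : V} {p : G.Walk u v} (hp : p.IsPath)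
    (hu : s(u, a) ∈ p.edges) (hv : s(v, a) ∈ p.edges) : p.length = 2 := by
  have hpos : 0 < p.length :=
    not_nil_iff_lt_length.mp (edges_eq_nil.not.mp (List.ne_nil_of_mem hu))
  have hsnd := hp.eq_snd_of_mem_edges hu
  have hpen := hp.eq_penultimate_of_mem_edges hv
  have := hp.getVert_injOn (by simp; omega) (by simp) (hsnd.symm.trans hpen)
  omega

lemma IsCycle.exists_eq_cons_concat {u : V} {c : G.Walk u u} (hc : c.IsCycle) :
    ∃ (a b : V) (ha : G.Adj u a) (q : G.Walk a b) (hb : G.Adj b u),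
      c = cons ha (q.concat hb) ∧ q.IsPath ∧ u ∉ q.support := by
  cases c with
  | nil => exact absurd hc not_isCycle_nil
  | @cons _ a _ ha p =>
    obtain ⟨b, q, hb, hq⟩ : ∃ (b : V) (q : G.Walk a b) (hb : G.Adj b u), p = q.concat hb := by
      cases p with
      | nil => exact (not_nil_of_isCycle_cons hc Nil.nil).elim
      | cons h p => exact exists_cons_eq_concat h p
    subst hq
    obtain ⟨hpath, -⟩ := (cons_isCycle_iff _ _).mp hc
    exact ⟨_, b, ha, q, hb, rfl, (concat_isPath_iff hb).mp hpath⟩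

lemma IsCycle.exists_isPath_of_toSubgraph_adj_iff {u x y : V} {c : G.Walk u u}
    (hc : c.IsCycle) (hnbrs : ∀ v, c.toSubgraph.Adj u v ↔ v = x ∨ v = y) :
    ∃ q : G.Walk x y, q.IsPath ∧ u ∉ q.support ∧ c.length = q.length + 2 ∧
      (∀ v, v ∈ c.support ↔ v = u ∨ v ∈ q.support) ∧ ∀ e ∈ c.edges, u ∉ e → e ∈ q.edges := by
  obtain ⟨a, b, ha, q, hb, rfl, hq, hu⟩ := hc.exists_eq_cons_concat
  have hlen : (cons ha (q.concat hb)).length = q.length + 2 := by simp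
  have hsupp : ∀ v, v ∈ (cons ha (q.concat hb)).support ↔ v = u ∨ v ∈ q.support := by
    simp [support_concat, or_comm]
  have hedges : ∀ e ∈ (cons ha (q.concat hb)).edges, u ∉ e → e ∈ q.edges := by
    simp only [edges_cons, edges_concat, List.concat_eq_append, List.mem_cons, List.mem_append,
      List.not_mem_nil, or_false]
    rintro e (rfl | he | rfl) hue
    · exact absurd (Sym2.mem_mk_left u a) hue
    · exact he
    · exact absurd (Sym2.mem_mk_right b u) hue
  have hab : a ≠ b := by
    rintro rfl
    have := hc.three_le_length
    simp [length_eq_zero_iff.mpr (isPath_iff_nil.mp hq)] at this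
  have hax : a = x ∨ a = y := (hnbrs a).mp (by simp)
  have hbx : b = x ∨ b = y := (hnbrs b).mp
    (Subgraph.mem_edgeSet.mp ((mem_edges_toSubgraph _).mpr (by simp [edges_concat])))
  rcases hax with rfl | rfl <;> rcases hbx with rfl | rfl
  · exact absurd rfl hab
  · exact ⟨q, hq, hu, hlen, hsupp, hedges⟩
  · exact ⟨q.reverse, hq.reverse, by simpa using hu, by simp,
      fun v => by simpa using hsupp v, fun e he hue => by simpa using hedges e he hue⟩
  · exact absurd rfl hab

theorem IsCycle.length_eq_four_of_adj_of_adj {u x y r : V} {c : G.Walk u u} (hc : c.IsCycle)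
    (hchordless : c.IsChordless) (hnbrs : ∀ v, c.toSubgraph.Adj u v ↔ v = x ∨ v = y)
    (hr : r ∈ c.support) (hru : r ≠ u) (hrx : G.Adj r x) (hry : G.Adj r y) : c.length = 4 := by
  obtain ⟨q, hq, hu, hlen, hsupp, hedges⟩ := hc.exists_isPath_of_toSubgraph_adj_iff hnbrs
  have hedge : ∀ z, z ∈ q.support → c.toSubgraph.Adj u z → G.Adj r z → s(z, r) ∈ q.edges :=
    fun z hz huz hrz => hedges _ (hchordless.mem_edges ((hsupp z).2 (.inr hz)) hr hrz.symm)
      (by simp [Sym2.mem_iff, huz.ne, hru.symm])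
  have := hq.length_eq_two_of_mem_edges
    (hedge x q.start_mem_support ((hnbrs x).2 (.inl rfl)) hrx)
    (hedge y q.end_mem_support ((hnbrs y).2 (.inr rfl)) hry)
  omega

end SimpleGraph.Walk

section Tucker

variable {m n : ℕ} {M : Fin m → Fin n → Bool} {w : Fin m} {x y : Fin n}

lemma inl_mem_tuckerSet_iff {r : Fin m} : Sum.inl r ∈ tuckerSet M w x y ↔
    ¬((graphOf M).Adj (Sum.inl r) (Sum.inr x) ∧ (graphOf M).Adj (Sum.inl r) (Sum.inr y)) := by
  simp [tuckerSet]

lemma inr_mem_tuckerSet_iff {c : Fin n} : Sum.inr c ∈ tuckerSet M w x y ↔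
    ¬(graphOf M).Adj (Sum.inl w) (Sum.inr c) ∨ c = x ∨ c = y := by
  simp [tuckerSet]
  tauto

end Tucker

theorem induced_cycle_through_w_lies_in_tuckerSet_general {m n : ℕ} (M : Fin m → Fin n → Bool)
    (w : Fin m) (x y : Fin n)
    (Z : (graphOf M).Walk (Sum.inl w) (Sum.inl w))
    (hZcycle : Z.IsCycle)
    (hZlen : 6 ≤ Z.length)
    (hZinduced : ∀ a b, a ∈ Z.support → b ∈ Z.support →
      (graphOf M).Adj a b → Z.toSubgraph.Adj a b)
    (hZnbrs : ∀ v, Z.toSubgraph.Adj (Sum.inl w) v ↔ (v = Sum.inr x ∨ v = Sum.inr y)) :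
    (∀ v ∈ Z.support, v ≠ Sum.inl w → v ∈ tuckerSet M w x y) ∧
    (∃ q : ((graphOf M).induce (tuckerSet M w x y)).Walk
        ⟨Sum.inr x, mem_tuckerSet_x M w x y⟩ ⟨Sum.inr y, mem_tuckerSet_y M w x y⟩,
      q.IsPath ∧ (∀ v, v ∈ q.support.map Subtype.val ↔ (v ∈ Z.support ∧ v ≠ Sum.inl w)) ∧
      q.length + 2 = Z.length) ∧
    ((graphOf M).induce (tuckerSet M w x y)).dist
        ⟨Sum.inr x, mem_tuckerSet_x M w x y⟩ ⟨Sum.inr y, mem_tuckerSet_y M w x y⟩ + 2 ≤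
      Z.length := by
  have hZchordless : Z.IsChordless := Walk.isChordless_iff_forall_mem_edges.mpr
    fun a b ha hb hab => (Walk.mem_edges_toSubgraph Z).mp (hZinduced a b ha hb hab)
  obtain ⟨q, hq, hwq, hlen, hsupp, -⟩ := hZcycle.exists_isPath_of_toSubgraph_adj_iff hZnbrs
  have hH : ∀ v ∈ Z.support, v ≠ Sum.inl w → v ∈ tuckerSet M w x y := by
    rintro (r | c) hv hvw
    · rw [inl_mem_tuckerSet_iff]
      rintro ⟨hrx, hry⟩
      have := hZcycle.length_eq_four_of_adj_of_adj hZchordless hZnbrs hv hvw hrx hry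
      omega
    · rw [inr_mem_tuckerSet_iff, ← imp_iff_not_or]
      exact fun hwc => by simpa using (hZnbrs _).mp (hZinduced _ _ Z.start_mem_support hv hwc)
  have hqH : ∀ v ∈ q.support, v ∈ tuckerSet M w x y :=
    fun v hv => hH v ((hsupp v).2 (.inr hv)) (ne_of_mem_of_not_mem hv hwq)
  refine ⟨hH, ⟨q.induce _ hqH, hq.induce hqH, fun v => ?_, by simp [hlen]⟩, ?_⟩
  · rw [Walk.support_induce_map_val, hsupp]
    have hvw : v ∈ q.support → v ≠ Sum.inl w := fun hv => ne_of_mem_of_not_mem hv hwq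
    tauto
  · have := dist_le (q.induce _ hqH)
    simp only [Walk.length_induce] at this
    omega

/-- If `Z` is an induced (chordless) cycle of `G(M)` of length at least `6` containing
the black vertex `w`, whose two neighbors on `Z` are the white vertices `x` and `y`,
then every vertex of `Z` other than `w` lies in
`H = G(M)[(R \ (N(x) ∩ N(y))) ∪ (C \ N(w)) ∪ {x,y}]`; consequently `Z` minus `w` is an
`x`–`y` path in `H`, and the length of `Z` is at least `dist_H(x,y) + 2`. -/
theorem induced_cycle_through_w_lies_in_tuckerSet {m n : ℕ} (M : Fin m → Fin n → Bool)
    (w : Fin m) (x y : Fin n) (hxy : x ≠ y)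
    (hwx : (graphOf M).Adj (Sum.inl w) (Sum.inr x))
    (hwy : (graphOf M).Adj (Sum.inl w) (Sum.inr y))
    (Z : (graphOf M).Walk (Sum.inl w) (Sum.inl w))
    (hZcycle : Z.IsCycle)
    (hZlen : 6 ≤ Z.length)
    (hZinduced : ∀ a b, a ∈ Z.support → b ∈ Z.support →
      (graphOf M).Adj a b → Z.toSubgraph.Adj a b)
    (hZnbrs : ∀ v, Z.toSubgraph.Adj (Sum.inl w) v ↔ (v = Sum.inr x ∨ v = Sum.inr y)) :
    (∀ v ∈ Z.support, v ≠ Sum.inl w → v ∈ tuckerSet M w x y) ∧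
    (∃ q : ((graphOf M).induce (tuckerSet M w x y)).Walk
        ⟨Sum.inr x, mem_tuckerSet_x M w x y⟩ ⟨Sum.inr y, mem_tuckerSet_y M w x y⟩,
      q.IsPath ∧ (∀ v, v ∈ q.support.map Subtype.val ↔ (v ∈ Z.support ∧ v ≠ Sum.inl w)) ∧
      q.length + 2 = Z.length) ∧
    ((graphOf M).induce (tuckerSet M w x y)).dist
        ⟨Sum.inr x, mem_tuckerSet_x M w x y⟩ ⟨Sum.inr y, mem_tuckerSet_y M w x y⟩ + 2 ≤
      Z.length :=
  induced_cycle_through_w_lies_in_tuckerSet_general M w x y Z hZcycle hZlen hZinduced hZnbrs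
end

section
/- In the setting of the graph G' from the cross-edges configuration: if exactly one of the pairs in E' = {{a,v},{a,w},{b,u},{b,w},{c,u},{c,v}} is an edge of G, then G' contains an induced subgraph isomorphic to G_{III_1}. (For instance, if the single edge is {b,u}, then the vertices d,u,a,x,b,y,w induce G_{III_1}, with u as the white vertex adjacent to the three black vertices d, a, b.) -/
/-!
Write the unique edge of `E'` as `{a_p, u_q}` with `p ≠ q`, indexing `a, b, c` / `x, y, z` /
`u, v, w` by `Fin 3`, and let `k` be the third index. The black vertices `d, a_p, a_q` have the
common neighbour `u_q` and the private neighbours `u_k, x_p, x_q`; that `u_k` sees neither `a_p`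
nor `a_q` is exactly the uniqueness of the `E'`-edge, since `{a_p, u_k}` and `{a_q, u_k}` lie
in `E'`. These seven vertices therefore induce `G_III_1`.
-/

open SimpleGraph

/-- The cross-edges configuration: a bipartite graph `G` containing black vertices
`a,b,c,d` and white vertices `x,y,z,u,v,w` (all ten distinct), with the edges
`{x,a},{y,b},{z,c},{a,u},{b,v},{c,w},{u,d},{v,d},{w,d}` present, the pairs
`{x,b},{x,c},{x,d},{y,a},{y,c},{y,d},{z,a},{z,b},{z,d}` absent, and black vertices
(resp. white vertices) pairwise non-adjacent; the only undetermined pairs are those in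
`E' = {{a,v},{a,w},{b,u},{b,w},{c,u},{c,v}}`. -/
structure CrossConfig {V : Type*} (G : SimpleGraph V) where
  a : V
  b : V
  c : V
  d : V
  x : V
  y : V
  z : V
  u : V
  v : V
  w : V
  distinct : List.Pairwise (· ≠ ·) [a, b, c, d, x, y, z, u, v, w]
  blackIndep : ∀ p ∈ ({a, b, c, d} : Set V), ∀ q ∈ ({a, b, c, d} : Set V), ¬G.Adj p q
  whiteIndep : ∀ p ∈ ({x, y, z, u, v, w} : Set V), ∀ q ∈ ({x, y, z, u, v, w} : Set V),
    ¬G.Adj p q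
  exa : G.Adj x a
  eyb : G.Adj y b
  ezc : G.Adj z c
  eau : G.Adj a u
  ebv : G.Adj b v
  ecw : G.Adj c w
  eud : G.Adj u d
  evd : G.Adj v d
  ewd : G.Adj w d
  nxb : ¬G.Adj x b
  nxc : ¬G.Adj x c
  nxd : ¬G.Adj x d
  nya : ¬G.Adj y a
  nyc : ¬G.Adj y c
  nyd : ¬G.Adj y d
  nza : ¬G.Adj z a
  nzb : ¬G.Adj z b
  nzd : ¬G.Adj z d

/-- The set `E'` of the six undetermined pairs, as a finset of unordered pairs. -/
def crossE' {V : Type*} [DecidableEq V] {G : SimpleGraph V} (C : CrossConfig G) :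
    Finset (Sym2 V) :=
  {s(C.a, C.v), s(C.a, C.w), s(C.b, C.u), s(C.b, C.w), s(C.c, C.u), s(C.c, C.v)}


/-- Tucker's forbidden subgraph `G_III_1`: black vertices `p,q,r` (rows `0,1,2`) and
white vertices `p',q',r',t` (columns `0,1,2,3`), with edge set exactly
`{p,t},{q,t},{r,t},{p,p'},{q,q'},{r,r'}`. -/
def GIII1 : SimpleGraph (Fin 3 ⊕ Fin 4) :=
  graphOf (fun i j => (!![true,false,false,true;
                          false,true,false,true;
                          false,false,true,true] : Matrix (Fin 3) (Fin 4) Bool) i j)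

section

variable {V : Type*} {G : SimpleGraph V}

def graphOfEmbedding {m n : ℕ} (M : Fin m → Fin n → Bool) (f : Fin m ⊕ Fin n → V)
    (hf : Function.Injective f)
    (hinl : ∀ i i', ¬G.Adj (f (.inl i)) (f (.inl i')))
    (hinr : ∀ j j', ¬G.Adj (f (.inr j)) (f (.inr j')))
    (hinl_inr : ∀ i j, G.Adj (f (.inl i)) (f (.inr j)) ↔ M i j = true) :
    graphOf M ↪g G where
  toFun := f
  inj' := hf
  map_rel_iff' := by
    rintro (i | j) (i' | j')
    · simp [graphOf, hinl]
    · simp [graphOf, hinl_inr]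
    · simp [graphOf, G.adj_comm (f (.inr _)), hinl_inr]
    · simp [graphOf, hinr]

theorem SimpleGraph.Embedding.exists_iso_induce_apply {W : Type*} {H : SimpleGraph W}
    (φ : H ↪g G) {S : Set V} (hS : Set.range φ = S) :
    ∃ f : G.induce S ≃g H, ∀ w (hw : φ w ∈ S), f ⟨φ w, hw⟩ = w := by
  subst hS
  exact ⟨φ.isoInduceRange.symm, fun w _ => by simp [Embedding.isoInduceRange]⟩

namespace CrossConfig

variable (C : CrossConfig G)

def vertex : Fin 10 → V := [C.a, C.b, C.c, C.d, C.x, C.y, C.z, C.u, C.v, C.w].get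

theorem vertex_injective : Function.Injective C.vertex :=
  List.nodup_iff_injective_get.1 C.distinct

def black (i : Fin 3) : V := C.vertex ⟨i, by omega⟩
def pendant (i : Fin 3) : V := C.vertex ⟨i + 4, by omega⟩
def link (i : Fin 3) : V := C.vertex ⟨i + 7, by omega⟩

theorem adj_black_pendant_iff (i j : Fin 3) : G.Adj (C.black i) (C.pendant j) ↔ i = j := by
  fin_cases i <;> fin_cases j <;>
    simp [black, pendant, vertex, G.adj_comm C.a, G.adj_comm C.b, G.adj_comm C.c,
      C.exa, C.eyb, C.ezc, C.nxb, C.nxc, C.nya, C.nyc, C.nza, C.nzb]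

theorem adj_black_link_self (i : Fin 3) : G.Adj (C.black i) (C.link i) := by
  fin_cases i
  exacts [C.eau, C.ebv, C.ecw]

theorem adj_d_link (i : Fin 3) : G.Adj C.d (C.link i) := by
  fin_cases i
  exacts [C.eud.symm, C.evd.symm, C.ewd.symm]

theorem not_adj_d_pendant (i : Fin 3) : ¬G.Adj C.d (C.pendant i) := by
  fin_cases i
  exacts [mt G.adj_symm C.nxd, mt G.adj_symm C.nyd, mt G.adj_symm C.nzd]

theorem black_mem (i : Fin 3) : C.black i ∈ ({C.a, C.b, C.c, C.d} : Set V) := by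
  fin_cases i <;> simp [black, vertex]

theorem pendant_mem (i : Fin 3) : C.pendant i ∈ ({C.x, C.y, C.z, C.u, C.v, C.w} : Set V) := by
  fin_cases i <;> simp [pendant, vertex]

theorem link_mem (i : Fin 3) : C.link i ∈ ({C.x, C.y, C.z, C.u, C.v, C.w} : Set V) := by
  fin_cases i <;> simp [link, vertex]

theorem sym2_black_link_inj {p q p' q' : Fin 3} :
    s(C.black p, C.link q) = s(C.black p', C.link q') ↔ p = p' ∧ q = q' := by
  simp only [Sym2.eq_iff, black, link, C.vertex_injective.eq_iff, Fin.ext_iff]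
  omega

theorem mem_crossE'_iff [DecidableEq V] {e : Sym2 V} :
    e ∈ crossE' C ↔ ∃ p q, p ≠ q ∧ e = s(C.black p, C.link q) := by
  simp [crossE', Fin.exists_fin_succ, black, link, vertex, or_assoc]

-- For distinct `p, q`, this is the remaining index, as `0 + 1 + 2 = 0` in `Fin 3`.
def third (p q : Fin 3) : Fin 3 := -(p + q)

theorem third_ne_right {p q : Fin 3} (h : p ≠ q) : third p q ≠ q := by
  revert p q; decide

theorem third_ne_left {p q : Fin 3} (h : p ≠ q) : third p q ≠ p := by
  revert p q; decide

def tripodIndex (p q : Fin 3) : Fin 3 ⊕ Fin 4 → Fin 10 :=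
  Sum.elim ![3, ⟨p, by omega⟩, ⟨q, by omega⟩]
    ![⟨third p q + 7, by omega⟩, ⟨p + 4, by omega⟩, ⟨q + 4, by omega⟩, ⟨q + 7, by omega⟩]

theorem tripodIndex_injective {p q : Fin 3} (h : p ≠ q) :
    Function.Injective (tripodIndex p q) := by
  revert p q; decide

def tripod (p q : Fin 3) : Fin 3 ⊕ Fin 4 → V :=
  Sum.elim ![C.d, C.black p, C.black q] ![C.link (third p q), C.pendant p, C.pendant q, C.link q]

theorem tripod_eq_vertex_comp (p q : Fin 3) : C.tripod p q = C.vertex ∘ tripodIndex p q := by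
  funext i
  rcases i with i | j
  · fin_cases i <;> rfl
  · fin_cases j <;> rfl

theorem tripod_injective {p q : Fin 3} (h : p ≠ q) : Function.Injective (C.tripod p q) := by
  rw [tripod_eq_vertex_comp]
  exact C.vertex_injective.comp (tripodIndex_injective h)

theorem range_tripod_subset (p q : Fin 3) :
    Set.range (C.tripod p q) ⊆ {C.a, C.b, C.c, C.d, C.x, C.y, C.z, C.u, C.v, C.w} := by
  rw [tripod_eq_vertex_comp]
  refine (Set.range_comp_subset_range _ _).trans ?_
  rw [vertex, Set.range_list_get]
  intro v hv
  simpa using hv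

theorem range_tripod_one_zero :
    Set.range (C.tripod 1 0) = {C.d, C.u, C.a, C.x, C.b, C.y, C.w} := by
  ext v
  simp only [tripod, Set.mem_range, Sum.exists, Fin.exists_fin_succ, Sum.elim_inl, Sum.elim_inr]
  simp [black, pendant, link, vertex, third]
  tauto

variable {C} in
def tripodEmbedding {p q : Fin 3} (hpq : p ≠ q) (hedge : G.Adj (C.black p) (C.link q))
    (hp : ¬G.Adj (C.black p) (C.link (third p q)))
    (hq : ¬G.Adj (C.black q) (C.link (third p q))) : GIII1 ↪g G :=
  graphOfEmbedding _ (C.tripod p q) (C.tripod_injective hpq)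
    (fun i i' => C.blackIndep _ (by fin_cases i <;> simp [tripod, C.black_mem]) _
      (by fin_cases i' <;> simp [tripod, C.black_mem]))
    (fun j j' => C.whiteIndep _ (by fin_cases j <;> simp [tripod, C.pendant_mem, C.link_mem]) _
      (by fin_cases j' <;> simp [tripod, C.pendant_mem, C.link_mem]))
    (by
      intro i j
      fin_cases i <;> fin_cases j <;>
        simp [tripod, hedge, hp, hq, hpq, hpq.symm, C.adj_black_pendant_iff, C.adj_d_link,
          C.adj_black_link_self, C.not_adj_d_pendant])

end CrossConfig

end

/-- If exactly one of the pairs in `E' = {{a,v},{a,w},{b,u},{b,w},{c,u},{c,v}}` is an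
edge of `G`, then the subgraph `G'` of `G` induced by the ten vertices contains an
induced subgraph isomorphic to `G_III_1`; for instance, if the single edge is `{b,u}`,
then the vertices `d,u,a,x,b,y,w` induce `G_III_1`, with `u` as the white vertex
(column `3`) adjacent to the three black vertices `d,a,b`. -/
theorem crossConfig_one_edge_GIII1 {V : Type*} [DecidableEq V] {G : SimpleGraph V}
    (C : CrossConfig G)
    (h : ∃ e ∈ crossE' C, e ∈ G.edgeSet ∧ ∀ e' ∈ crossE' C, e' ∈ G.edgeSet → e' = e) :
    (∃ S : Set V, S ⊆ {C.a, C.b, C.c, C.d, C.x, C.y, C.z, C.u, C.v, C.w} ∧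
      Nonempty ((G.induce S) ≃g GIII1)) ∧
    ((∀ e' ∈ crossE' C, e' ∈ G.edgeSet → e' = s(C.b, C.u)) →
      ∃ f : (G.induce {C.d, C.u, C.a, C.x, C.b, C.y, C.w}) ≃g GIII1,
        f ⟨C.u, by simp⟩ = Sum.inr 3) := by
  obtain ⟨e, he, hedge, hunique⟩ := h
  obtain ⟨p, q, hpq, rfl⟩ := C.mem_crossE'_iff.1 he
  have hsingle (p' q' : Fin 3) (hne : p' ≠ q') (hadj : G.Adj (C.black p') (C.link q')) :
      p' = p ∧ q' = q :=
    C.sym2_black_link_inj.1 (hunique _ (C.mem_crossE'_iff.2 ⟨p', q', hne, rfl⟩) hadj)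
  let φ := CrossConfig.tripodEmbedding hpq hedge
    (fun hadj => CrossConfig.third_ne_right hpq
      (hsingle p _ (CrossConfig.third_ne_left hpq).symm hadj).2)
    (fun hadj => hpq (hsingle q _ (CrossConfig.third_ne_right hpq).symm hadj).1.symm)
  refine ⟨⟨_, C.range_tripod_subset p q, ⟨φ.isoInduceRange.symm⟩⟩, fun hbu => ?_⟩
  obtain ⟨rfl, rfl⟩ : p = 1 ∧ q = 0 :=
    (C.sym2_black_link_inj (p' := 1) (q' := 0)).1 (hbu _ he hedge)
  obtain ⟨f, hf⟩ := φ.exists_iso_induce_apply C.range_tripod_one_zero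
  exact ⟨f, hf (.inr 3) _⟩
end

section
/- For every integer k ≥ 3, the k×k binary matrix M defined by M[i,j] = 1 if and only if j = i or j = i + 1 (indices taken modulo k) does not have the Consecutive Ones Property. (Its corresponding bipartite graph is a chordless cycle of length 2k, the Tucker forbidden subgraph of type I.) -/
/-!
Under a consecutive-ones ordering of the columns, a row with exactly two ones puts its two
columns at adjacent positions. In the cyclic matrix, row `i` has its ones at columns `i` and
`i + 1`, so the columns `i` and `i + 1` sit at adjacent positions for every `i`. The column in
the first position then has both cyclic neighbours `i - 1` and `i + 1` in the second position,
which forces `i - 1 = i + 1`, i.e. `2 = 0` modulo `k`.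
-/

/-- A binary matrix has the Consecutive Ones Property: its columns can be permuted so
that in every row all ones appear consecutively. -/
def HasC1P {m n : ℕ} (M : Fin m → Fin n → Bool) : Prop :=
  ∃ σ : Equiv.Perm (Fin n), ∀ (i : Fin m) (j k l : Fin n),
    j ≤ k → k ≤ l → M i (σ j) = true → M i (σ l) = true → M i (σ k) = true

def IsConsecutiveOnesOrder {m n : ℕ} (M : Fin m → Fin n → Bool) (σ : Equiv.Perm (Fin n)) :
    Prop :=
  ∀ (i : Fin m) (j k l : Fin n),
    j ≤ k → k ≤ l → M i (σ j) = true → M i (σ l) = true → M i (σ k) = true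

theorem hasC1P_iff_exists_isConsecutiveOnesOrder {m n : ℕ} (M : Fin m → Fin n → Bool) :
    HasC1P M ↔ ∃ σ, IsConsecutiveOnesOrder M σ :=
  Iff.rfl

theorem IsConsecutiveOnesOrder.covBy_or_covBy {m n : ℕ} {M : Fin m → Fin n → Bool}
    {σ : Equiv.Perm (Fin n)} (hσ : IsConsecutiveOnesOrder M σ) {i : Fin m} {a b : Fin n}
    (hab : a ≠ b) (hrow : ∀ j, M i j = true ↔ j = a ∨ j = b) :
    σ.symm a ⋖ σ.symm b ∨ σ.symm b ⋖ σ.symm a := by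
  wlog hlt : σ.symm a < σ.symm b generalizing a b
  · rcases (not_lt.mp hlt).lt_or_eq with hgt | heq
    · exact (this hab.symm (fun j => (hrow j).trans or_comm) hgt).symm
    · exact absurd (σ.symm.injective heq) hab.symm
  refine Or.inl ⟨hlt, fun c hac hcb => ?_⟩
  have hc := hσ i _ c _ hac.le hcb.le (by simp [hrow]) (by simp [hrow])
  rcases (hrow _).mp hc with h | h
  · exact hac.ne (by simp [← h])
  · exact hcb.ne (by simp [← h])

theorem Equiv.add_self_eq_zero_of_covBy_or_covBy {G ι : Type*} [AddGroup G] [LinearOrder ι]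
    [OrderBot ι] (f : G ≃ ι) (a : G) (hf : ∀ g, f g ⋖ f (g + a) ∨ f (g + a) ⋖ f g) :
    a + a = 0 := by
  set g := f.symm ⊥
  have bot_covBy : ∀ h, f h ⋖ ⊥ ∨ ⊥ ⋖ f h → ⊥ ⋖ f h := fun h =>
    (Or.resolve_left · fun hcov => not_lt_bot hcov.lt)
  have hnext : ⊥ ⋖ f (g + a) := bot_covBy _ (by simpa [g] using (hf g).symm)
  have hprev : ⊥ ⋖ f (g - a) := bot_covBy _ (by simpa [g] using hf (g - a))
  have heq : g + a = g - a := f.injective (hnext.unique_right hprev)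
  rw [sub_eq_add_neg, add_left_cancel_iff] at heq
  exact eq_neg_iff_add_eq_zero.mp heq

theorem Fin.val_eq_add_one_mod_iff {k : ℕ} [NeZero k] (i j : Fin k) :
    (j : ℕ) = ((i : ℕ) + 1) % k ↔ j = i + 1 := by
  rw [Fin.ext_iff, Fin.val_add, Fin.val_one', Nat.add_mod_mod]

/-- For every `k ≥ 3`, the `k × k` binary matrix with `M[i,j] = 1` iff `j = i` or
`j = i + 1` (indices modulo `k`) does not have the Consecutive Ones Property; its
bipartite graph is a chordless cycle of length `2k`, the Tucker forbidden subgraph of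
type I. -/
theorem circulant_not_C1P (k : ℕ) (hk : 3 ≤ k) :
    ¬HasC1P (fun i j : Fin k => decide ((j : ℕ) = i ∨ (j : ℕ) = ((i : ℕ) + 1) % k)) := by
  rw [hasC1P_iff_exists_isConsecutiveOnesOrder]
  rintro ⟨σ, hσ⟩
  have : NeZero k := ⟨by omega⟩
  have two_ne_zero : (1 : Fin k) + 1 ≠ 0 := by
    simp only [ne_eq, Fin.ext_iff, Fin.val_add, Fin.val_one', Fin.val_zero]
    rw [Nat.one_mod_eq_one.mpr (by omega), Nat.mod_eq_of_lt (by omega)]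
    omega
  refine two_ne_zero (σ.symm.add_self_eq_zero_of_covBy_or_covBy 1 fun i => ?_)
  have self_ne_succ : i ≠ i + 1 := fun h => two_ne_zero (by rw [left_eq_add.mp h, add_zero])
  exact hσ.covBy_or_covBy (i := i) self_ne_succ fun j => by
    simp [Fin.val_eq_add_one_mod_iff, Fin.ext_iff]
end

section
/- The 4×6 binary matrix [[1,0,0,1,0,0],[0,1,0,0,1,0],[0,0,1,0,0,1],[0,0,0,1,1,1]] does not have the Consecutive Ones Property. (Its corresponding bipartite graph is the Tucker forbidden subgraph G_IV.) -/
/-- Placing column `σ k` at position `k`, the ones of the row `r` occupy consecutive positions. -/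
def OnesConsecutive {n : ℕ} (σ : Equiv.Perm (Fin n)) (r : Fin n → Bool) : Prop :=
  ∀ j k l : Fin n, j ≤ k → k ≤ l → r (σ j) = true → r (σ l) = true → r (σ k) = true

theorem hasC1P_iff_exists_onesConsecutive {m n : ℕ} (M : Fin m → Fin n → Bool) :
    HasC1P M ↔ ∃ σ : Equiv.Perm (Fin n), ∀ i, OnesConsecutive σ (M i) :=
  Iff.rfl

def AdjacentUnder {n : ℕ} (σ : Equiv.Perm (Fin n)) (a b : Fin n) : Prop :=
  (σ.symm a : ℕ) + 1 = σ.symm b ∨ (σ.symm b : ℕ) + 1 = σ.symm a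

namespace AdjacentUnder

variable {n : ℕ} {σ : Equiv.Perm (Fin n)}

theorem symm {a b : Fin n} (h : AdjacentUnder σ a b) : AdjacentUnder σ b a :=
  Or.symm h

theorem eq_or_eq_or_eq {c x y z : Fin n} (hx : AdjacentUnder σ c x) (hy : AdjacentUnder σ c y)
    (hz : AdjacentUnder σ c z) : x = y ∨ x = z ∨ y = z := by
  unfold AdjacentUnder at hx hy hz
  by_contra! h
  have := Fin.val_injective.ne (σ.symm.injective.ne h.1)
  have := Fin.val_injective.ne (σ.symm.injective.ne h.2.1)
  have := Fin.val_injective.ne (σ.symm.injective.ne h.2.2)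
  omega

end AdjacentUnder

namespace OnesConsecutive

variable {n : ℕ} {σ : Equiv.Perm (Fin n)} {r : Fin n → Bool}

theorem exists_one_at_succ (hr : OnesConsecutive σ r) {a b : Fin n} (ha : r a = true)
    (hb : r b = true) (hab : (σ.symm a : ℕ) < σ.symm b) :
    ∃ c, r c = true ∧ (σ.symm c : ℕ) = σ.symm a + 1 := by
  have hlt : (σ.symm a : ℕ) + 1 < n := lt_of_le_of_lt hab (σ.symm b).isLt
  refine ⟨σ ⟨_, hlt⟩, hr (σ.symm a) ⟨_, hlt⟩ (σ.symm b) ?_ hab (by simpa) (by simpa), by simp⟩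
  exact Fin.le_iff_val_le_val.2 (Nat.le_succ _)

theorem adjacentUnder_of_ones_eq_pair (hr : OnesConsecutive σ r) {a b : Fin n} (hab : a ≠ b)
    (hones : ∀ c, r c = true ↔ c = a ∨ c = b) : AdjacentUnder σ a b := by
  wlog hlt : (σ.symm a : ℕ) < σ.symm b generalizing a b
  · have hne := Fin.val_injective.ne (σ.symm.injective.ne hab)
    exact (this hab.symm (fun c => (hones c).trans or_comm) (by omega)).symm
  obtain ⟨c, hc, hpos⟩ :=
    hr.exists_one_at_succ ((hones a).2 (.inl rfl)) ((hones b).2 (.inr rfl)) hlt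
  rcases (hones c).1 hc with rfl | rfl
  · omega
  · exact .inl hpos.symm

theorem adjacentUnder_of_between (hr : OnesConsecutive σ r) {u v w : Fin n}
    (hones : ∀ c, r c = true ↔ c = u ∨ c = v ∨ c = w)
    (huv : (σ.symm u : ℕ) < σ.symm v) (hvw : (σ.symm v : ℕ) < σ.symm w) :
    AdjacentUnder σ v u ∧ AdjacentUnder σ v w := by
  have hw : r w = true := (hones w).2 (.inr (.inr rfl))
  obtain ⟨c, hc, hcpos⟩ :=
    hr.exists_one_at_succ ((hones u).2 (.inl rfl)) hw (huv.trans hvw)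
  obtain rfl : c = v := by
    rcases (hones c).1 hc with rfl | rfl | rfl
    · omega
    · rfl
    · omega
  obtain ⟨d, hd, hdpos⟩ := hr.exists_one_at_succ hc hw hvw
  obtain rfl : d = w := by
    rcases (hones d).1 hd with rfl | rfl | rfl
    · omega
    · omega
    · rfl
  exact ⟨.inr hcpos.symm, .inl hdpos.symm⟩

theorem exists_adjacentUnder_of_ones_eq_triple (hr : OnesConsecutive σ r) {u v w : Fin n}
    (huv : u ≠ v) (huw : u ≠ w) (hvw : v ≠ w) (hones : ∀ c, r c = true ↔ c = u ∨ c = v ∨ c = w) :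
    (AdjacentUnder σ u v ∧ AdjacentUnder σ u w) ∨ (AdjacentUnder σ v u ∧ AdjacentUnder σ v w) ∨
      (AdjacentUnder σ w u ∧ AdjacentUnder σ w v) := by
  have huv' := Fin.val_injective.ne (σ.symm.injective.ne huv)
  have huw' := Fin.val_injective.ne (σ.symm.injective.ne huw)
  have hvw' := Fin.val_injective.ne (σ.symm.injective.ne hvw)
  have perm : ∀ {x y z : Fin n}, (∀ c, c = u ∨ c = v ∨ c = w ↔ c = x ∨ c = y ∨ c = z) →
      ∀ c, r c = true ↔ c = x ∨ c = y ∨ c = z := fun h c => (hones c).trans (h c)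
  rcases lt_or_gt_of_ne huv' with h₁ | h₁ <;> rcases lt_or_gt_of_ne hvw' with h₂ | h₂ <;>
    rcases lt_or_gt_of_ne huw' with h₃ | h₃
  · exact .inr (.inl (hr.adjacentUnder_of_between hones h₁ h₂))
  · omega
  · exact .inr (.inr (hr.adjacentUnder_of_between (perm (by tauto)) h₃ h₂))
  · exact .inl (hr.adjacentUnder_of_between (perm (by tauto)) h₃ h₁).symm
  · exact .inl (hr.adjacentUnder_of_between (perm (by tauto)) h₁ h₃)
  · exact .inr (.inr (hr.adjacentUnder_of_between (perm (by tauto)) h₂ h₃).symm)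
  · omega
  · exact .inr (.inl (hr.adjacentUnder_of_between (perm (by tauto)) h₂ h₁).symm)

end OnesConsecutive

/-- The `4 × 6` binary matrix
`[[1,0,0,1,0,0],[0,1,0,0,1,0],[0,0,1,0,0,1],[0,0,0,1,1,1]]`, whose bipartite graph is
the Tucker forbidden subgraph `G_IV`, does not have the Consecutive Ones Property. -/
theorem GIV_matrix_not_C1P :
    ¬HasC1P (fun i j => (!![true,false,false,true,false,false;
                            false,true,false,false,true,false;
                            false,false,true,false,false,true;
                            false,false,false,true,true,true] : Matrix (Fin 4) (Fin 6) Bool) i j) := by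
  rw [hasC1P_iff_exists_onesConsecutive]
  rintro ⟨σ, hσ⟩
  have h03 := (hσ 0).adjacentUnder_of_ones_eq_pair (a := 0) (b := 3) (by decide) (by decide)
  have h14 := (hσ 1).adjacentUnder_of_ones_eq_pair (a := 1) (b := 4) (by decide) (by decide)
  have h25 := (hσ 2).adjacentUnder_of_ones_eq_pair (a := 2) (b := 5) (by decide) (by decide)
  rcases (hσ 3).exists_adjacentUnder_of_ones_eq_triple (u := 3) (v := 4) (w := 5)
    (by decide) (by decide) (by decide) (by decide) with ⟨h34, h35⟩ | ⟨h43, h45⟩ | ⟨h53, h54⟩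
  · exact absurd (h03.symm.eq_or_eq_or_eq h34 h35) (by decide)
  · exact absurd (h14.symm.eq_or_eq_or_eq h43 h45) (by decide)
  · exact absurd (h25.symm.eq_or_eq_or_eq h53 h54) (by decide)
end

section
/- In the bipartite graph G_IV, the three white vertices x, y, z form a white asteroidal triple, and the minimum possible total length of three connecting paths (a path from x to y avoiding N(z), a path from x to z avoiding N(y), and a path from y to z avoiding N(x)) equals 18; in particular each of these paths has length exactly 6, so the total path length exceeds the number of vertices of G_IV by 8. -/
open SimpleGraph

/-- An asteroidal triple: an independent set of three vertices such that every pair of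
them is joined by a path avoiding the neighborhood of the third vertex. -/
def IsAsteroidalTriple {V : Type*} (G : SimpleGraph V) (u v w : V) : Prop :=
  u ≠ v ∧ u ≠ w ∧ v ≠ w ∧ ¬G.Adj u v ∧ ¬G.Adj u w ∧ ¬G.Adj v w ∧
  (∃ p : G.Walk u v, ∀ t ∈ p.support, ¬G.Adj w t) ∧
  (∃ p : G.Walk u w, ∀ t ∈ p.support, ¬G.Adj v t) ∧
  (∃ p : G.Walk v w, ∀ t ∈ p.support, ¬G.Adj u t)

/-- Tucker's forbidden subgraph `G_IV`: black vertices `a,b,c,d` (rows `0,1,2,3`) and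
white vertices `x,y,z,u,v,w` (columns `0,1,2,3,4,5`), with edge set exactly
`{a,x},{a,u},{b,y},{b,v},{c,z},{c,w},{d,u},{d,v},{d,w}`. -/
def GIV : SimpleGraph (Fin 4 ⊕ Fin 6) :=
  graphOf (fun i j => (!![true,false,false,true,false,false;
                          false,true,false,false,true,false;
                          false,false,true,false,false,true;
                          false,false,false,true,true,true] : Matrix (Fin 4) (Fin 6) Bool) i j)

/-! Each of the three paths has to pass through the hub `d`, e.g. `x a u d v b y` for the pair
`x, y`. Minimality is certified by a potential, the distance from the source in `G_IV` with the
neighbourhood of the third vertex removed: it grows by at most one along each edge of an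
avoiding walk. The automorphisms of `G_IV` permuting the branches `(a,x,u), (b,y,v), (c,z,w)`
reduce the three pairs to one. -/

instance {m n : ℕ} (M : Fin m → Fin n → Bool) : DecidableRel (graphOf M).Adj :=
  fun _ _ => inferInstanceAs (Decidable (_ ∧ _))

instance : DecidableRel GIV.Adj := inferInstanceAs (DecidableRel (graphOf _).Adj)

namespace SimpleGraph

variable {V V' : Type*} {G : SimpleGraph V} {G' : SimpleGraph V'}

theorem Walk.le_add_length_of_lipschitz {S : Set V} (f : V → ℕ)
    (hf : ∀ a b, G.Adj a b → a ∈ S → b ∈ S → f b ≤ f a + 1) {u v : V} (p : G.Walk u v)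
    (hp : ∀ t ∈ p.support, t ∈ S) : f v ≤ f u + p.length := by
  induction p with
  | nil => simp
  | cons hadj q ih =>
    simp only [Walk.support_cons, List.mem_cons, forall_eq_or_imp] at hp
    have hstep := hf _ _ hadj hp.1 (hp.2 _ q.start_mem_support)
    have hrest := ih hp.2
    simp only [Walk.length_cons]
    omega

theorem Walk.avoids_map_iff (φ : G ≃g G') {u v w : V} {w' : V'} (hw : φ w = w')
    (p : G.Walk u v) :
    (∀ t ∈ (p.map φ.toHom).support, ¬G'.Adj w' t) ↔ ∀ t ∈ p.support, ¬G.Adj w t := by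
  subst hw
  simp [Walk.support_map, φ.map_adj_iff]

def IsMinAvoidingWalkLength (G : SimpleGraph V) (u v w : V) (n : ℕ) : Prop :=
  (∃ p : G.Walk u v, (∀ t ∈ p.support, ¬G.Adj w t) ∧ p.length = n) ∧
    ∀ p : G.Walk u v, (∀ t ∈ p.support, ¬G.Adj w t) → n ≤ p.length

theorem IsMinAvoidingWalkLength.of_iso {u v w : V} {n : ℕ}
    (h : G.IsMinAvoidingWalkLength u v w n) (φ : G ≃g G') :
    G'.IsMinAvoidingWalkLength (φ u) (φ v) (φ w) n := by
  obtain ⟨⟨p, hp, hlen⟩, hmin⟩ := h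
  refine ⟨⟨p.map φ.toHom, (p.avoids_map_iff φ rfl).2 hp, by simpa using hlen⟩, fun q hq => ?_⟩
  let q' : G.Walk u v := (q.map φ.symm.toHom).copy (φ.symm_apply_apply u) (φ.symm_apply_apply v)
  have hq' : ∀ t ∈ q'.support, ¬G.Adj w t := by
    simpa [q'] using (q.avoids_map_iff φ.symm (φ.symm_apply_apply w)).2 hq
  simpa [q'] using hmin q' hq'

end SimpleGraph

namespace GIV

def swapXY : GIV ≃g GIV where
  toEquiv := Equiv.sumCongr (Equiv.swap 0 1) ((Equiv.swap 0 1).trans (Equiv.swap 3 4))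
  map_rel_iff' := by
    intro a b
    revert a b
    decide

def swapYZ : GIV ≃g GIV where
  toEquiv := Equiv.sumCongr (Equiv.swap 1 2) ((Equiv.swap 1 2).trans (Equiv.swap 4 5))
  map_rel_iff' := by
    intro a b
    revert a b
    decide

def xyWalk : GIV.Walk (.inr 0) (.inr 1) :=
  .cons (v := .inl 0) (by decide) <| .cons (v := .inr 3) (by decide) <|
  .cons (v := .inl 3) (by decide) <| .cons (v := .inr 4) (by decide) <|
  .cons (v := .inl 1) (by decide) <| .cons (by decide) .nil

/-- Distance from `x` once `N(z) = {c}` is removed; the value at `c` is arbitrary. -/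
def xyPotential : Fin 4 ⊕ Fin 6 → ℕ := Sum.elim ![1, 5, 0, 3] ![0, 6, 0, 2, 4, 4]

theorem isMinAvoidingWalkLength_xy :
    GIV.IsMinAvoidingWalkLength (.inr 0) (.inr 1) (.inr 2) 6 := by
  refine ⟨⟨xyWalk, by decide, rfl⟩, fun p hp => ?_⟩
  simpa [xyPotential] using
    p.le_add_length_of_lipschitz (S := {t | ¬GIV.Adj (.inr 2) t}) xyPotential (by decide) hp

theorem isMinAvoidingWalkLength_xz :
    GIV.IsMinAvoidingWalkLength (.inr 0) (.inr 2) (.inr 1) 6 :=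
  isMinAvoidingWalkLength_xy.of_iso swapYZ

theorem isMinAvoidingWalkLength_yz :
    GIV.IsMinAvoidingWalkLength (.inr 1) (.inr 2) (.inr 0) 6 :=
  isMinAvoidingWalkLength_xz.of_iso swapXY

end GIV

/-- In `G_IV` the white vertices `x, y, z` (columns `0, 1, 2`) form a white asteroidal
triple; the minimum length of each of the three connecting paths (each avoiding the
neighborhood of the third vertex) is `6`, the minimum total length of the three paths
is `18`, which exceeds the number of vertices of `G_IV` by `8`. -/
theorem GIV_asteroidal_triple :
    IsAsteroidalTriple GIV (Sum.inr 0) (Sum.inr 1) (Sum.inr 2) ∧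
    ((∃ p : GIV.Walk (Sum.inr 0) (Sum.inr 1),
        (∀ t ∈ p.support, ¬GIV.Adj (Sum.inr 2) t) ∧ p.length = 6) ∧
      ∀ p : GIV.Walk (Sum.inr 0) (Sum.inr 1),
        (∀ t ∈ p.support, ¬GIV.Adj (Sum.inr 2) t) → 6 ≤ p.length) ∧
    ((∃ p : GIV.Walk (Sum.inr 0) (Sum.inr 2),
        (∀ t ∈ p.support, ¬GIV.Adj (Sum.inr 1) t) ∧ p.length = 6) ∧
      ∀ p : GIV.Walk (Sum.inr 0) (Sum.inr 2),
        (∀ t ∈ p.support, ¬GIV.Adj (Sum.inr 1) t) → 6 ≤ p.length) ∧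
    ((∃ p : GIV.Walk (Sum.inr 1) (Sum.inr 2),
        (∀ t ∈ p.support, ¬GIV.Adj (Sum.inr 0) t) ∧ p.length = 6) ∧
      ∀ p : GIV.Walk (Sum.inr 1) (Sum.inr 2),
        (∀ t ∈ p.support, ¬GIV.Adj (Sum.inr 0) t) → 6 ≤ p.length) ∧
    ((∃ (p : GIV.Walk (Sum.inr 0) (Sum.inr 1)) (q : GIV.Walk (Sum.inr 0) (Sum.inr 2))
        (r : GIV.Walk (Sum.inr 1) (Sum.inr 2)),
        (∀ t ∈ p.support, ¬GIV.Adj (Sum.inr 2) t) ∧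
        (∀ t ∈ q.support, ¬GIV.Adj (Sum.inr 1) t) ∧
        (∀ t ∈ r.support, ¬GIV.Adj (Sum.inr 0) t) ∧
        p.length + q.length + r.length = 18) ∧
      ∀ (p : GIV.Walk (Sum.inr 0) (Sum.inr 1)) (q : GIV.Walk (Sum.inr 0) (Sum.inr 2))
        (r : GIV.Walk (Sum.inr 1) (Sum.inr 2)),
        (∀ t ∈ p.support, ¬GIV.Adj (Sum.inr 2) t) →
        (∀ t ∈ q.support, ¬GIV.Adj (Sum.inr 1) t) →
        (∀ t ∈ r.support, ¬GIV.Adj (Sum.inr 0) t) →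
        18 ≤ p.length + q.length + r.length) ∧
    18 = Fintype.card (Fin 4 ⊕ Fin 6) + 8 := by
  have hxy := GIV.isMinAvoidingWalkLength_xy
  have hxz := GIV.isMinAvoidingWalkLength_xz
  have hyz := GIV.isMinAvoidingWalkLength_yz
  obtain ⟨pxy, hpxy, lxy⟩ := hxy.1
  obtain ⟨pxz, hpxz, lxz⟩ := hxz.1
  obtain ⟨pyz, hpyz, lyz⟩ := hyz.1
  refine ⟨⟨by decide, by decide, by decide, by decide, by decide, by decide,
      ⟨pxy, hpxy⟩, ⟨pxz, hpxz⟩, ⟨pyz, hpyz⟩⟩, hxy, hxz, hyz,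
    ⟨⟨pxy, pxz, pyz, hpxy, hpxz, hpyz, by omega⟩, fun p q r hp hq hr => ?_⟩, rfl⟩
  have := hxy.2 p hp
  have := hxz.2 q hq
  have := hyz.2 r hr
  omega
end

section
/- In the bipartite graph G_V, the three white vertices x, y, z form a white asteroidal triple, and the minimum possible total length of three connecting paths (a path from x to y avoiding N(z), a path from x to z avoiding N(y), and a path from y to z avoiding N(x)) equals 10; in particular the minimum lengths of these three paths are 4, 4 and 2, so the total path length exceeds the number of vertices of G_V by 1. -/
open SimpleGraph

/-- Tucker's forbidden subgraph `G_V`: black vertices `a,b,c,d` (rows `0,1,2,3`) and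
white vertices `x,y,z,u,v` (columns `0,1,2,3,4`), with edge set exactly
`{a,x},{a,u},{a,v},{b,u},{b,v},{b,y},{b,z},{c,v},{c,z},{d,u},{d,y}`. -/
def GV : SimpleGraph (Fin 4 ⊕ Fin 5) :=
  graphOf (fun i j => (!![true,false,false,true,true;
                          false,true,true,true,true;
                          false,false,true,false,true;
                          false,true,false,true,false] : Matrix (Fin 4) (Fin 5) Bool) i j)

/-!
The three walks `x-a-u-d-y` (avoiding `N(z) = {b, c}`), `x-a-v-c-z` (avoiding `N(y) = {b, d}`)
and `y-b-z` (avoiding `N(x) = {a}`) witness the asteroidal triple and have lengths `4, 4, 2`.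
They are shortest: a vertex labelling that grows by at most one along every edge inside the
allowed region bounds the length of every walk there from below, and the breadth-first
distances from the start vertex give such labellings.
-/

namespace SimpleGraph.Walk

variable {V : Type*} {G : SimpleGraph V}

theorem le_add_length_of_forall_adj_le_succ {P : V → Prop} {f : V → ℕ}
    (hf : ∀ s t, G.Adj s t → P s → P t → f t ≤ f s + 1) {a b : V} (p : G.Walk a b)
    (hp : ∀ t ∈ p.support, P t) : f b ≤ f a + p.length := by
  induction p with
  | nil => simp
  | cons h q ih =>
    simp only [support_cons, List.mem_cons, forall_eq_or_imp] at hp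
    have hstep := hf _ _ h hp.1 (hp.2 _ q.start_mem_support)
    have hrest := ih hp.2
    simp only [length_cons]
    omega

end SimpleGraph.Walk

instance graphOf.decidableAdj {m n : ℕ} (M : Fin m → Fin n → Bool) :
    DecidableRel (graphOf M).Adj := fun p q =>
  decidable_of_iff _ (fromRel_adj _ p q).symm

instance instDecidableRelAdjGV : DecidableRel GV.Adj := graphOf.decidableAdj _

def GV_walkXY : GV.Walk (.inr 0) (.inr 1) :=
  .cons (v := .inl 0) (by decide) <| .cons (v := .inr 3) (by decide) <|
    .cons (v := .inl 3) (by decide) <| .cons (by decide) .nil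

def GV_walkXZ : GV.Walk (.inr 0) (.inr 2) :=
  .cons (v := .inl 0) (by decide) <| .cons (v := .inr 4) (by decide) <|
    .cons (v := .inl 2) (by decide) <| .cons (by decide) .nil

def GV_walkYZ : GV.Walk (.inr 1) (.inr 2) :=
  .cons (v := .inl 1) (by decide) <| .cons (by decide) .nil

theorem GV_walkXY_avoids : ∀ t ∈ GV_walkXY.support, ¬GV.Adj (.inr 2) t := by decide

theorem GV_walkXZ_avoids : ∀ t ∈ GV_walkXZ.support, ¬GV.Adj (.inr 1) t := by decide

theorem GV_walkYZ_avoids : ∀ t ∈ GV_walkYZ.support, ¬GV.Adj (.inr 0) t := by decide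

theorem GV_isAsteroidalTriple : IsAsteroidalTriple GV (.inr 0) (.inr 1) (.inr 2) :=
  ⟨by decide, by decide, by decide, by decide, by decide, by decide,
    ⟨_, GV_walkXY_avoids⟩, ⟨_, GV_walkXZ_avoids⟩, ⟨_, GV_walkYZ_avoids⟩⟩

/- The labellings below are the distances from the start vertex inside the allowed region
(rows `a, b, c, d`, then columns `x, y, z, u, v`); unreachable vertices get `0`. -/

theorem GV_four_le_length_of_avoids_inr_two (p : GV.Walk (.inr 0) (.inr 1))
    (hp : ∀ t ∈ p.support, ¬GV.Adj (.inr 2) t) : 4 ≤ p.length := by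
  simpa using Walk.le_add_length_of_forall_adj_le_succ
    (f := Sum.elim ![1, 0, 0, 3] ![0, 4, 0, 2, 2]) (by decide) p hp

theorem GV_four_le_length_of_avoids_inr_one (p : GV.Walk (.inr 0) (.inr 2))
    (hp : ∀ t ∈ p.support, ¬GV.Adj (.inr 1) t) : 4 ≤ p.length := by
  simpa using Walk.le_add_length_of_forall_adj_le_succ
    (f := Sum.elim ![1, 0, 3, 0] ![0, 0, 4, 2, 2]) (by decide) p hp

theorem GV_two_le_length_of_avoids_inr_zero (p : GV.Walk (.inr 1) (.inr 2))
    (hp : ∀ t ∈ p.support, ¬GV.Adj (.inr 0) t) : 2 ≤ p.length := by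
  simpa using Walk.le_add_length_of_forall_adj_le_succ
    (f := Sum.elim ![0, 1, 3, 1] ![0, 0, 2, 2, 2]) (by decide) p hp

/-- In `G_V` the white vertices `x, y, z` (columns `0, 1, 2`) form a white asteroidal
triple; the minimum lengths of the three connecting paths (each avoiding the
neighborhood of the third vertex) are `4`, `4` and `2`, so the minimum total length of
the three paths is `10`, which exceeds the number of vertices of `G_V` by `1`. -/
theorem GV_asteroidal_triple :
    IsAsteroidalTriple GV (Sum.inr 0) (Sum.inr 1) (Sum.inr 2) ∧
    ((∃ p : GV.Walk (Sum.inr 0) (Sum.inr 1),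
        (∀ t ∈ p.support, ¬GV.Adj (Sum.inr 2) t) ∧ p.length = 4) ∧
      ∀ p : GV.Walk (Sum.inr 0) (Sum.inr 1),
        (∀ t ∈ p.support, ¬GV.Adj (Sum.inr 2) t) → 4 ≤ p.length) ∧
    ((∃ p : GV.Walk (Sum.inr 0) (Sum.inr 2),
        (∀ t ∈ p.support, ¬GV.Adj (Sum.inr 1) t) ∧ p.length = 4) ∧
      ∀ p : GV.Walk (Sum.inr 0) (Sum.inr 2),
        (∀ t ∈ p.support, ¬GV.Adj (Sum.inr 1) t) → 4 ≤ p.length) ∧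
    ((∃ p : GV.Walk (Sum.inr 1) (Sum.inr 2),
        (∀ t ∈ p.support, ¬GV.Adj (Sum.inr 0) t) ∧ p.length = 2) ∧
      ∀ p : GV.Walk (Sum.inr 1) (Sum.inr 2),
        (∀ t ∈ p.support, ¬GV.Adj (Sum.inr 0) t) → 2 ≤ p.length) ∧
    ((∃ (p : GV.Walk (Sum.inr 0) (Sum.inr 1)) (q : GV.Walk (Sum.inr 0) (Sum.inr 2))
        (r : GV.Walk (Sum.inr 1) (Sum.inr 2)),
        (∀ t ∈ p.support, ¬GV.Adj (Sum.inr 2) t) ∧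
        (∀ t ∈ q.support, ¬GV.Adj (Sum.inr 1) t) ∧
        (∀ t ∈ r.support, ¬GV.Adj (Sum.inr 0) t) ∧
        p.length + q.length + r.length = 10) ∧
      ∀ (p : GV.Walk (Sum.inr 0) (Sum.inr 1)) (q : GV.Walk (Sum.inr 0) (Sum.inr 2))
        (r : GV.Walk (Sum.inr 1) (Sum.inr 2)),
        (∀ t ∈ p.support, ¬GV.Adj (Sum.inr 2) t) →
        (∀ t ∈ q.support, ¬GV.Adj (Sum.inr 1) t) →
        (∀ t ∈ r.support, ¬GV.Adj (Sum.inr 0) t) →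
        10 ≤ p.length + q.length + r.length) ∧
    10 = Fintype.card (Fin 4 ⊕ Fin 5) + 1 := by
  refine ⟨GV_isAsteroidalTriple,
    ⟨⟨_, GV_walkXY_avoids, rfl⟩, GV_four_le_length_of_avoids_inr_two⟩,
    ⟨⟨_, GV_walkXZ_avoids, rfl⟩, GV_four_le_length_of_avoids_inr_one⟩,
    ⟨⟨_, GV_walkYZ_avoids, rfl⟩, GV_two_le_length_of_avoids_inr_zero⟩,
    ⟨⟨_, _, _, GV_walkXY_avoids, GV_walkXZ_avoids, GV_walkYZ_avoids, rfl⟩, ?_⟩, rfl⟩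
  intro p q r hp hq hr
  have := GV_four_le_length_of_avoids_inr_two p hp
  have := GV_four_le_length_of_avoids_inr_one q hq
  have := GV_two_le_length_of_avoids_inr_zero r hr
  omega
end
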